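/- For any Parseval frame Φ for F^N with M vectors, the quantity V(Φ) = ∑_i (||φ_i||² − N/M)² + ∑_{i≠j} (|⟨φ_i,φ_j⟩| − c_Φ)², where c_Φ = TC(Φ)/(M(M−1)), satisfies V(Φ) = N(M−N)/M − TC(Φ)²/(M(M−1)). -/

import Mathlib

open Matrix Finset

noncomputable def totalCoherence {N M : ℕ} (Φ : Matrix (Fin N) (Fin M) ℂ) : ℝ :=
  ∑ i, ∑ j ∈ Finset.univ.erase i, ‖(Φᴴ * Φ) i j‖

/-!
The Gram matrix `P = Φᴴ Φ` of a Parseval frame is an orthogonal projection of trace `N`, so its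
diagonal sums to `N` and, since `P = P Pᴴ`, the squared moduli of all its entries also sum to `N`.
Both sums in `V(Φ)` are sums of squared deviations from a mean, `∑ (x - x̄)² = ∑ x² - (∑ x)² / n`;
adding them, `∑ P_ii²` cancels and `N - N² / M - TC(Φ)² / (M (M - 1))` remains.
-/

namespace Finset

variable {ι : Type*}

theorem sum_sub_sq_sum_div_card {K : Type*} [Field K] (s : Finset ι) (f : ι → K) :
    ∑ i ∈ s, (f i - (∑ j ∈ s, f j) / #s) ^ 2 = ∑ i ∈ s, f i ^ 2 - (∑ i ∈ s, f i) ^ 2 / #s := by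
  set S := ∑ i ∈ s, f i
  have hcard : (#s : K) * (S / #s) ^ 2 = S ^ 2 / #s := by
    obtain h | h := eq_or_ne (#s : K) 0
    · simp [h]
    · field_simp
  simp only [sub_sq, sum_add_distrib, sum_sub_distrib, ← sum_mul, ← mul_sum, sum_const,
    nsmul_eq_mul, hcard]
  ring

theorem sum_sum_erase_eq_sum_offDiag [DecidableEq ι] {β : Type*} [AddCommMonoid β]
    (s : Finset ι) (f : ι → ι → β) :
    ∑ i ∈ s, ∑ j ∈ s.erase i, f i j = ∑ p ∈ s.offDiag, f p.1 p.2 := by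
  refine (sum_finset_product' _ _ _ fun p => ?_).symm
  simp only [mem_offDiag, mem_erase]
  tauto

theorem natCast_card_offDiag [DecidableEq ι] {R : Type*} [Ring R] (s : Finset ι) :
    (#s.offDiag : R) = #s * (#s - 1) := by
  rw [offDiag_card, Nat.cast_sub (Nat.le_mul_self _)]
  push_cast
  rw [mul_sub, mul_one]

end Finset

namespace Matrix

variable {m n 𝕜 : Type*} [Fintype n] [RCLike 𝕜]

theorem isStarProjection_conjTranspose_mul_self [Fintype m] [DecidableEq m] [DecidableEq n]
    {R : Type*} [Semiring R] [StarRing R] {A : Matrix m n R} (hA : A * Aᴴ = 1) :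
    IsStarProjection (Aᴴ * A) where
  isIdempotentElem := by
    rw [IsIdempotentElem, Matrix.mul_assoc, ← Matrix.mul_assoc A, hA, Matrix.one_mul]
  isSelfAdjoint := isHermitian_conjTranspose_mul_self A

variable {P : Matrix n n 𝕜}

theorem IsStarProjection.sum_norm_sq_apply (hP : IsStarProjection P) (i : n) :
    ∑ j, ‖P i j‖ ^ 2 = RCLike.re (P i i) := by
  have hPP : P * Pᴴ = P := by
    rw [← star_eq_conjTranspose, hP.isSelfAdjoint.star_eq, hP.isIdempotentElem.eq]
  have : P i i = ((∑ j, ‖P i j‖ ^ 2 : ℝ) : 𝕜) := by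
    conv_lhs => rw [← hPP]
    push_cast
    simp only [mul_apply, conjTranspose_apply, RCLike.star_def, RCLike.mul_conj]
  rw [this, RCLike.ofReal_re]

theorem IsStarProjection.norm_sq_apply_self (hP : IsStarProjection P) (i : n) :
    ‖P i i‖ ^ 2 = RCLike.re (P i i) ^ 2 := by
  rw [← (IsHermitian.coe_re_apply_self hP.isSelfAdjoint i), RCLike.norm_ofReal, sq_abs,
    RCLike.ofReal_re]

theorem IsStarProjection.sum_offDiag_norm_sq [DecidableEq n] (hP : IsStarProjection P) :
    ∑ p ∈ univ.offDiag, ‖P p.1 p.2‖ ^ 2 = ∑ i, RCLike.re (P i i) - ∑ i, RCLike.re (P i i) ^ 2 := by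
  rw [← sum_sum_erase_eq_sum_offDiag univ fun i j => ‖P i j‖ ^ 2, ← sum_sub_distrib]
  refine sum_congr rfl fun i _ => ?_
  rw [sum_erase_eq_sub (mem_univ i), hP.sum_norm_sq_apply, hP.norm_sq_apply_self]

end Matrix

theorem variance_formula {N M : ℕ}
    (Φ : Matrix (Fin N) (Fin M) ℂ) (hΦ : Φ * Φᴴ = 1) :
    (∑ i, (((Φᴴ * Φ) i i).re - (N : ℝ) / (M : ℝ)) ^ 2) +
        (∑ i, ∑ j ∈ Finset.univ.erase i,
          (‖(Φᴴ * Φ) i j‖ - totalCoherence Φ / ((M : ℝ) * ((M : ℝ) - 1))) ^ 2) =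
      (N : ℝ) * ((M : ℝ) - (N : ℝ)) / (M : ℝ) -
        (totalCoherence Φ) ^ 2 / ((M : ℝ) * ((M : ℝ) - 1)) := by
  set P := Φᴴ * Φ
  have hP : IsStarProjection P := isStarProjection_conjTranspose_mul_self hΦ
  have htrace : ∑ i, (P i i).re = N := by
    have := congrArg Complex.re (trace_mul_comm Φᴴ Φ)
    simpa [hΦ, trace, Complex.re_sum] using this
  have hT : totalCoherence Φ = ∑ p ∈ univ.offDiag, ‖P p.1 p.2‖ :=
    sum_sum_erase_eq_sum_offDiag _ _
  have hcard_offDiag : (#(univ : Finset (Fin M)).offDiag : ℝ) = M * (M - 1) := by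
    rw [natCast_card_offDiag, card_univ, Fintype.card_fin]
  have hoff_sq := hP.sum_offDiag_norm_sq
  simp only [RCLike.re_to_complex, htrace] at hoff_sq
  have hdiag : ∑ i, ((P i i).re - N / M) ^ 2 = ∑ i, (P i i).re ^ 2 - N ^ 2 / M := by
    simpa [htrace] using sum_sub_sq_sum_div_card univ fun i => (P i i).re
  have hoff : ∑ i, ∑ j ∈ univ.erase i, (‖P i j‖ - totalCoherence Φ / (M * (M - 1))) ^ 2 =
      N - ∑ i, (P i i).re ^ 2 - totalCoherence Φ ^ 2 / (M * (M - 1)) := by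
    rw [sum_sum_erase_eq_sum_offDiag, hT, ← hcard_offDiag, sum_sub_sq_sum_div_card, hoff_sq]
  have hN : (N : ℝ) * (M - N) / M = N - N ^ 2 / M := by
    obtain rfl | hM := eq_or_ne M 0
    · obtain rfl : N = 0 := by exact_mod_cast (by simpa using htrace.symm)
      simp
    · field_simp
  rw [hdiag, hoff, hN]
  ring
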